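/- Let A be an n-dimensional k-algebra with basis {e_1 = 1_A, ..., e_n}. The map γ̄ : U(G(a(A)^o)) → Aut_{Alg}(A) defined by γ̄(θ)(e_i) = Σ_{s=1}^n θ(x_{si}) e_s is an isomorphism of groups, where U(G(a(A)^o)) is the group of invertible group-like elements of the finite dual a(A)^o. -/

import Mathlib

open TensorProduct

noncomputable section

variable (k : Type) [Field k]

/-- The relations defining the quantum symmetry semigroup `a(A)` of a finite dimensional
algebra `A` with basis `e` (with `e 0 = 1`), in terms of the structure constants
`τ i j s = e.repr (e i * e j) s`. -/
inductive ARel {A : Type} [Ring A] [Algebra k A] {n : ℕ} [NeZero n]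
    (e : Module.Basis (Fin n) k A) :
    FreeAlgebra k (Fin n × Fin n) → FreeAlgebra k (Fin n × Fin n) → Prop
  | mul (a i j : Fin n) :
      ARel e (∑ u, e.repr (e i * e j) u • FreeAlgebra.ι k (a, u))
        (∑ s, ∑ t, e.repr (e s * e t) a • (FreeAlgebra.ι k (s, i) * FreeAlgebra.ι k (t, j)))
  | unit (a : Fin n) :
      ARel e (FreeAlgebra.ι k (a, (0 : Fin n))) (if a = 0 then 1 else 0)

/-- The quantum symmetry semigroup `a(A)`. -/
abbrev aA {A : Type} [Ring A] [Algebra k A] {n : ℕ} [NeZero n] (e : Module.Basis (Fin n) k A) :=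
  RingQuot (ARel k e)

/-- The generators `x_{s i}` of `a(A)`. -/
def xg {A : Type} [Ring A] [Algebra k A] {n : ℕ} [NeZero n] (e : Module.Basis (Fin n) k A)
    (s i : Fin n) : aA k e :=
  RingQuot.mkAlgHom k (ARel k e) (FreeAlgebra.ι k (s, i))

/-- The canonical map `η_A : A → A ⊗ a(A)`, `e i ↦ ∑ s, e s ⊗ x_{s i}`, as a linear map. -/
def etaA {A : Type} [Ring A] [Algebra k A] {n : ℕ} [NeZero n] (e : Module.Basis (Fin n) k A) :
    A →ₗ[k] A ⊗[k] aA k e :=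
  (e.constr k) fun i => ∑ s, e s ⊗ₜ[k] xg k e s i


variable {A : Type} [Ring A] [Algebra k A] {n : ℕ} [NeZero n]

/-- The convolution product on `Hom_Alg(a(A), k) = G(a(A)^o)`, defined via the
comultiplication `Δ` of `a(A)`. -/
def conv (e : Module.Basis (Fin n) k A) (Δ : aA k e →ₐ[k] aA k e ⊗[k] aA k e)
    (θ₁ θ₂ : aA k e →ₐ[k] k) : aA k e →ₐ[k] k :=
  (Algebra.TensorProduct.lmul' k (S := k)).comp ((Algebra.TensorProduct.map θ₁ θ₂).comp Δ)

-- ===== auxiliary lemmas =====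

/-- ext lemma: algebra maps out of `aA` agree if they agree on generators. -/
lemma aA_algHom_ext (e : Module.Basis (Fin n) k A) {B : Type} [Semiring B] [Algebra k B]
    {f g : aA k e →ₐ[k] B} (h : ∀ s i, f (xg k e s i) = g (xg k e s i)) : f = g := by
  have hc : f.comp (RingQuot.mkAlgHom k (ARel k e)) = g.comp (RingQuot.mkAlgHom k (ARel k e)) := by
    apply FreeAlgebra.hom_ext
    funext p
    simpa [xg] using h p.1 p.2
  apply DFunLike.ext
  intro x
  obtain ⟨y, rfl⟩ := RingQuot.mkAlgHom_surjective k (ARel k e) x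
  exact DFunLike.congr_fun hc y

/-- θ applied to the mul relation. -/
lemma theta_rel_mul (e : Module.Basis (Fin n) k A) (θ : aA k e →ₐ[k] k) (a i j : Fin n) :
    ∑ u, e.repr (e i * e j) u * θ (xg k e a u)
      = ∑ s, ∑ t, e.repr (e s * e t) a * (θ (xg k e s i) * θ (xg k e t j)) := by
  have h := congrArg θ (RingQuot.mkAlgHom_rel k (ARel.mul (e := e) a i j))
  simpa [xg, map_sum, map_smul, smul_eq_mul, map_mul] using h

/-- θ applied to the unit relation. -/
lemma theta_rel_unit (e : Module.Basis (Fin n) k A) (θ : aA k e →ₐ[k] k) (a : Fin n) :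
    θ (xg k e a 0) = if a = 0 then 1 else 0 := by
  have h := congrArg θ (RingQuot.mkAlgHom_rel k (ARel.unit (e := e) a))
  rcases eq_or_ne a 0 with h0 | h0 <;> simpa [xg, h0] using h


/-- The linear map `γ(θ) : A → A`. -/
def gam (e : Module.Basis (Fin n) k A) (θ : aA k e →ₐ[k] k) : A →ₗ[k] A :=
  e.constr k fun i => ∑ s, θ (xg k e s i) • e s

lemma gam_basis (e : Module.Basis (Fin n) k A) (θ : aA k e →ₐ[k] k) (i : Fin n) :
    gam k e θ (e i) = ∑ s, θ (xg k e s i) • e s := by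
  simp [gam]

lemma gam_one (e : Module.Basis (Fin n) k A) (he : e 0 = 1) (θ : aA k e →ₐ[k] k) :
    gam k e θ 1 = 1 := by
  rw [← he, gam_basis]
  have : ∀ s : Fin n, θ (xg k e s 0) • e s = if s = 0 then e 0 else 0 := by
    intro s
    rw [theta_rel_unit]
    split <;> simp_all
  rw [Finset.sum_congr rfl fun s _ => this s]
  simp [he]

lemma mul_expand (e : Module.Basis (Fin n) k A) (c d : Fin n → k) :
    (∑ s, c s • e s) * (∑ t, d t • e t)
      = ∑ a, (∑ s, ∑ t, e.repr (e s * e t) a * (c s * d t)) • e a := by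
  rw [Finset.sum_mul_sum]
  have h : ∀ s t : Fin n, c s • e s * (d t • e t)
      = ∑ a, (e.repr (e s * e t) a * (c s * d t)) • e a := by
    intro s t
    rw [smul_mul_smul_comm]
    conv_lhs => rw [← e.sum_repr (e s * e t)]
    rw [Finset.smul_sum]
    exact Finset.sum_congr rfl fun a _ => by rw [smul_smul, mul_comm]
  simp_rw [h]
  calc ∑ s, ∑ t, ∑ a, (e.repr (e s * e t) a * (c s * d t)) • e a
      = ∑ s, ∑ a, ∑ t, (e.repr (e s * e t) a * (c s * d t)) • e a :=
        Finset.sum_congr rfl fun s _ => Finset.sum_comm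
    _ = ∑ a, ∑ s, ∑ t, (e.repr (e s * e t) a * (c s * d t)) • e a := Finset.sum_comm
    _ = ∑ a, (∑ s, ∑ t, e.repr (e s * e t) a * (c s * d t)) • e a := by
        simp_rw [Finset.sum_smul]

lemma gam_mul_basis (e : Module.Basis (Fin n) k A) (θ : aA k e →ₐ[k] k) (i j : Fin n) :
    gam k e θ (e i * e j) = gam k e θ (e i) * gam k e θ (e j) := by
  calc gam k e θ (e i * e j)
      = ∑ u, e.repr (e i * e j) u • gam k e θ (e u) := by
        conv_lhs => rw [← e.sum_repr (e i * e j), map_sum]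
        simp_rw [map_smul]
    _ = ∑ a, (∑ u, e.repr (e i * e j) u * θ (xg k e a u)) • e a := by
        simp_rw [gam_basis, Finset.smul_sum, smul_smul]
        rw [Finset.sum_comm]
        simp_rw [Finset.sum_smul]
    _ = ∑ a, (∑ s, ∑ t, e.repr (e s * e t) a * (θ (xg k e s i) * θ (xg k e t j))) • e a := by
        simp_rw [theta_rel_mul]
    _ = gam k e θ (e i) * gam k e θ (e j) := by
        rw [gam_basis, gam_basis, mul_expand]

lemma gam_mul (e : Module.Basis (Fin n) k A) (θ : aA k e →ₐ[k] k) (x y : A) :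
    gam k e θ (x * y) = gam k e θ x * gam k e θ y := by
  revert x y
  rw [LinearMap.map_mul_iff]
  apply e.ext; intro i
  apply e.ext; intro j
  simpa using gam_mul_basis k e θ i j

/-- `γ(θ)` as an algebra hom. -/
def gamHom (e : Module.Basis (Fin n) k A) (he : e 0 = 1) (θ : aA k e →ₐ[k] k) : A →ₐ[k] A :=
  AlgHom.ofLinearMap (gam k e θ) (gam_one k e he θ) (gam_mul k e θ)

lemma conv_xg (e : Module.Basis (Fin n) k A) (Δ : aA k e →ₐ[k] aA k e ⊗[k] aA k e)
    (hΔ : ∀ i j, Δ (xg k e i j) = ∑ s, xg k e i s ⊗ₜ[k] xg k e s j)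
    (θ₁ θ₂ : aA k e →ₐ[k] k) (s i : Fin n) :
    conv k e Δ θ₁ θ₂ (xg k e s i) = ∑ t, θ₁ (xg k e s t) * θ₂ (xg k e t i) := by
  simp [conv, hΔ, map_sum]

lemma gam_conv (e : Module.Basis (Fin n) k A) (Δ : aA k e →ₐ[k] aA k e ⊗[k] aA k e)
    (hΔ : ∀ i j, Δ (xg k e i j) = ∑ s, xg k e i s ⊗ₜ[k] xg k e s j)
    (θ₁ θ₂ : aA k e →ₐ[k] k) :
    gam k e (conv k e Δ θ₁ θ₂) = (gam k e θ₁) ∘ₗ (gam k e θ₂) := by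
  apply e.ext; intro i
  rw [LinearMap.comp_apply, gam_basis, gam_basis, map_sum]
  simp_rw [map_smul, gam_basis, conv_xg k e Δ hΔ, Finset.smul_sum, smul_smul]
  rw [Finset.sum_comm]
  simp_rw [Finset.sum_smul]
  congr 1; funext s; congr 1; funext t; rw [mul_comm]

lemma gam_eps (e : Module.Basis (Fin n) k A) (ε : aA k e →ₐ[k] k)
    (hε : ∀ i j, ε (xg k e i j) = if i = j then 1 else 0) :
    gam k e ε = LinearMap.id := by
  apply e.ext; intro i
  rw [gam_basis]
  simp [hε]

/-- Lift to the free algebra of the functional associated to an algebra endomorphism. -/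
def thetaF (e : Module.Basis (Fin n) k A) (φ : A →ₐ[k] A) : FreeAlgebra k (Fin n × Fin n) →ₐ[k] k :=
  FreeAlgebra.lift k fun p => e.repr (φ (e p.2)) p.1

lemma thetaF_rel (e : Module.Basis (Fin n) k A) (he : e 0 = 1) (φ : A →ₐ[k] A) :
    ∀ ⦃x y⦄, ARel k e x y → thetaF k e φ x = thetaF k e φ y := by
  intro x y h
  cases h with
  | mul a i j =>
    simp only [map_sum, map_smul, map_mul, thetaF, FreeAlgebra.lift_ι_apply, smul_eq_mul]
    have h1 : e.repr (φ (e i * e j)) a = ∑ u, e.repr (e i * e j) u * e.repr (φ (e u)) a := by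
      conv_lhs => rw [← e.sum_repr (e i * e j)]
      simp only [map_sum, map_smul, Finsupp.finset_sum_apply, Finsupp.smul_apply, smul_eq_mul]
    have h2 : e.repr (φ (e i * e j)) a
        = ∑ s, ∑ t, e.repr (e s * e t) a * (e.repr (φ (e i)) s * e.repr (φ (e j)) t) := by
      rw [map_mul]
      conv_lhs => rw [← e.sum_repr (φ (e i)), ← e.sum_repr (φ (e j))]
      rw [mul_expand, map_sum]
      simp [Finset.sum_apply', Finsupp.single_apply]
    rw [← h1, h2]
  | unit a =>
    have h0 : thetaF k e φ (FreeAlgebra.ι k (a, (0 : Fin n))) = if a = 0 then 1 else 0 := by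
      simp only [thetaF, FreeAlgebra.lift_ι_apply]
      rw [he, map_one, ← he, e.repr_self]
      simp [Finsupp.single_apply, eq_comm]
    rw [h0]
    split <;> simp

/-- The functional `a(A) → k` associated to an algebra endomorphism `φ`. -/
def thetaOf (e : Module.Basis (Fin n) k A) (he : e 0 = 1) (φ : A →ₐ[k] A) : aA k e →ₐ[k] k :=
  RingQuot.liftAlgHom k ⟨thetaF k e φ, thetaF_rel k e he φ⟩

lemma thetaOf_xg (e : Module.Basis (Fin n) k A) (he : e 0 = 1) (φ : A →ₐ[k] A) (s i : Fin n) :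
    thetaOf k e he φ (xg k e s i) = e.repr (φ (e i)) s := by
  simp [thetaOf, xg, RingQuot.liftAlgHom_mkAlgHom_apply, thetaF, FreeAlgebra.lift_ι_apply]

lemma gam_thetaOf (e : Module.Basis (Fin n) k A) (he : e 0 = 1) (φ : A →ₐ[k] A) :
    gam k e (thetaOf k e he φ) = φ.toLinearMap := by
  apply e.ext; intro i
  rw [gam_basis]
  simp_rw [thetaOf_xg]
  simpa using e.sum_repr (φ (e i))

lemma conv_thetaOf (e : Module.Basis (Fin n) k A) (he : e 0 = 1)
    (Δ : aA k e →ₐ[k] aA k e ⊗[k] aA k e)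
    (hΔ : ∀ i j, Δ (xg k e i j) = ∑ s, xg k e i s ⊗ₜ[k] xg k e s j)
    (φ ψ : A →ₐ[k] A) :
    conv k e Δ (thetaOf k e he φ) (thetaOf k e he ψ) = thetaOf k e he (φ.comp ψ) := by
  apply aA_algHom_ext
  intro s i
  rw [conv_xg k e Δ hΔ, thetaOf_xg]
  simp_rw [thetaOf_xg]
  have : (φ.comp ψ) (e i) = ∑ t, e.repr (ψ (e i)) t • φ (e t) := by
    conv_lhs => rw [AlgHom.comp_apply, ← e.sum_repr (ψ (e i))]
    simp only [map_sum, map_smul]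
  rw [this]
  simp [map_sum, map_smul, Finset.sum_apply', smul_eq_mul, mul_comm]

lemma thetaOf_id (e : Module.Basis (Fin n) k A) (he : e 0 = 1) (ε : aA k e →ₐ[k] k)
    (hε : ∀ i j, ε (xg k e i j) = if i = j then 1 else 0) :
    thetaOf k e he (AlgHom.id k A) = ε := by
  apply aA_algHom_ext
  intro s i
  rw [thetaOf_xg, hε]
  simp [e.repr_self, Finsupp.single_apply, eq_comm]

lemma thetaOf_gamHom (e : Module.Basis (Fin n) k A) (he : e 0 = 1) (θ : aA k e →ₐ[k] k) :
    thetaOf k e he (gamHom k e he θ) = θ := by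
  apply aA_algHom_ext
  intro s i
  rw [thetaOf_xg]
  have : gamHom k e he θ (e i) = ∑ a, θ (xg k e a i) • e a := gam_basis k e θ i
  rw [this]
  simp [Finset.sum_apply', Finsupp.single_apply]

lemma thetaOf_congr (e : Module.Basis (Fin n) k A) (he : e 0 = 1) (φ ψ : A →ₐ[k] A)
    (h : ∀ x, φ x = ψ x) : thetaOf k e he φ = thetaOf k e he ψ := by
  apply aA_algHom_ext
  intro s i
  rw [thetaOf_xg, thetaOf_xg, h]

lemma gamHom_comp_eq_id (e : Module.Basis (Fin n) k A) (he : e 0 = 1)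
    (Δ : aA k e →ₐ[k] aA k e ⊗[k] aA k e) (ε : aA k e →ₐ[k] k)
    (hΔ : ∀ i j, Δ (xg k e i j) = ∑ s, xg k e i s ⊗ₜ[k] xg k e s j)
    (hε : ∀ i j, ε (xg k e i j) = if i = j then 1 else 0)
    (θ θ' : aA k e →ₐ[k] k) (h : conv k e Δ θ θ' = ε) (x : A) :
    gamHom k e he θ (gamHom k e he θ' x) = x := by
  have h1 := DFunLike.congr_fun (gam_conv k e Δ hΔ θ θ') x
  rw [h, gam_eps k e ε hε] at h1
  simpa [gamHom] using h1.symm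

/-- Forward map of the isomorphism: `θ ↦ γ̄(θ)`. -/
def PhiFun (e : Module.Basis (Fin n) k A) (he : e 0 = 1)
    (Δ : aA k e →ₐ[k] aA k e ⊗[k] aA k e) (ε : aA k e →ₐ[k] k)
    (hΔ : ∀ i j, Δ (xg k e i j) = ∑ s, xg k e i s ⊗ₜ[k] xg k e s j)
    (hε : ∀ i j, ε (xg k e i j) = if i = j then 1 else 0)
    (θ : {θ : aA k e →ₐ[k] k //
        ∃ θ' : aA k e →ₐ[k] k, conv k e Δ θ θ' = ε ∧ conv k e Δ θ' θ = ε}) : A ≃ₐ[k] A :=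
  AlgEquiv.ofAlgHom (gamHom k e he θ.1) (gamHom k e he θ.2.choose)
    (AlgHom.ext fun x =>
      gamHom_comp_eq_id k e he Δ ε hΔ hε θ.1 θ.2.choose θ.2.choose_spec.1 x)
    (AlgHom.ext fun x =>
      gamHom_comp_eq_id k e he Δ ε hΔ hε θ.2.choose θ.1 θ.2.choose_spec.2 x)

lemma PhiFun_apply (e : Module.Basis (Fin n) k A) (he : e 0 = 1)
    (Δ : aA k e →ₐ[k] aA k e ⊗[k] aA k e) (ε : aA k e →ₐ[k] k)
    (hΔ : ∀ i j, Δ (xg k e i j) = ∑ s, xg k e i s ⊗ₜ[k] xg k e s j)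
    (hε : ∀ i j, ε (xg k e i j) = if i = j then 1 else 0)
    (θ : {θ : aA k e →ₐ[k] k //
        ∃ θ' : aA k e →ₐ[k] k, conv k e Δ θ θ' = ε ∧ conv k e Δ θ' θ = ε}) (x : A) :
    PhiFun k e he Δ ε hΔ hε θ x = gam k e θ.1 x := rfl

/-- Inverse map of the isomorphism: `φ ↦ θ(φ)`. -/
def PhiInv (e : Module.Basis (Fin n) k A) (he : e 0 = 1)
    (Δ : aA k e →ₐ[k] aA k e ⊗[k] aA k e) (ε : aA k e →ₐ[k] k)
    (hΔ : ∀ i j, Δ (xg k e i j) = ∑ s, xg k e i s ⊗ₜ[k] xg k e s j)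
    (hε : ∀ i j, ε (xg k e i j) = if i = j then 1 else 0)
    (φ : A ≃ₐ[k] A) :
    {θ : aA k e →ₐ[k] k //
        ∃ θ' : aA k e →ₐ[k] k, conv k e Δ θ θ' = ε ∧ conv k e Δ θ' θ = ε} :=
  ⟨thetaOf k e he φ.toAlgHom, thetaOf k e he φ.symm.toAlgHom, by
      rw [conv_thetaOf k e he Δ hΔ, ← thetaOf_id k e he ε hε]
      exact thetaOf_congr k e he _ _ fun x => by simp, by
      rw [conv_thetaOf k e he Δ hΔ, ← thetaOf_id k e he ε hε]
      exact thetaOf_congr k e he _ _ fun x => by simp⟩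

/-- The map `γ̄ : U(G(a(A)^o)) → Aut_Alg(A)`,
`γ̄(θ)(e_i) = ∑ s θ(x_{si}) e_s`, is an isomorphism of groups, where `U(G(a(A)^o))` is the
group of convolution-invertible algebra maps `a(A) → k` (i.e. invertible group-like
elements of the finite dual `a(A)^o`). -/
theorem aut_iso_invertible_grouplikes (e : Module.Basis (Fin n) k A) (he : e 0 = 1)
    (Δ : aA k e →ₐ[k] aA k e ⊗[k] aA k e) (ε : aA k e →ₐ[k] k)
    (hΔ : ∀ i j, Δ (xg k e i j) = ∑ s, xg k e i s ⊗ₜ[k] xg k e s j)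
    (hε : ∀ i j, ε (xg k e i j) = if i = j then 1 else 0) :
    ∃ Φ : {θ : aA k e →ₐ[k] k //
            ∃ θ' : aA k e →ₐ[k] k, conv k e Δ θ θ' = ε ∧ conv k e Δ θ' θ = ε} ≃ (A ≃ₐ[k] A),
      (∀ θ i, Φ θ (e i) = ∑ s, (θ : aA k e →ₐ[k] k) (xg k e s i) • e s) ∧
      (∀ θ₁ θ₂ θ₃, θ₃.1 = conv k e Δ θ₁.1 θ₂.1 → Φ θ₃ = Φ θ₁ * Φ θ₂) := by
  classical
  refine ⟨⟨PhiFun k e he Δ ε hΔ hε, PhiInv k e he Δ ε hΔ hε, ?_, ?_⟩, ?_, ?_⟩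
  · intro θ
    apply Subtype.ext
    show thetaOf k e he _ = θ.1
    rw [thetaOf_congr k e he _ (gamHom k e he θ.1)
        fun x => PhiFun_apply k e he Δ ε hΔ hε θ x, thetaOf_gamHom]
  · intro φ
    apply AlgEquiv.ext
    intro x
    rw [PhiFun_apply]
    show gam k e (thetaOf k e he φ.toAlgHom) x = _
    rw [gam_thetaOf]
    rfl
  · intro θ i
    show PhiFun k e he Δ ε hΔ hε θ (e i) = _
    rw [PhiFun_apply, gam_basis]
  · intro θ₁ θ₂ θ₃ h
    apply AlgEquiv.ext
    intro x
    show PhiFun k e he Δ ε hΔ hε θ₃ x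
        = (PhiFun k e he Δ ε hΔ hε θ₁ * PhiFun k e he Δ ε hΔ hε θ₂) x
    rw [AlgEquiv.mul_apply, PhiFun_apply, PhiFun_apply, PhiFun_apply, h]
    exact DFunLike.congr_fun (gam_conv k e Δ hΔ θ₁.1 θ₂.1) x

end
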